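/- arXiv:0901.2211 — 5 statements merged into one kernel-verified Lean document; each statement's English description precedes it below -/
import Mathlib

section
/- Let α = (α₁,…,αₙ) ∈ ℤⁿ be nonzero, let m ≤ n, and assume α_{m+1} = ⋯ = αₙ = 0 and that the ℤ-submodule ℤ·α of ℤⁿ is saturated. Then there exists a surjective ℤ-module homomorphism ψ : ℤⁿ → ℤⁿ⁻¹ with kernel ℤ·α such that ψ(e⁽ⁿ⁾ⱼ) = e⁽ⁿ⁻¹⁾ⱼ₋₁ for all j = m+1,…,n, where e⁽ⁿ⁾ⱼ denotes the j-th standard basis vector of ℤⁿ. -/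
/-!
Write `α = g • γ` with `g` a generator of the ideal spanned by the entries of `α`. Then `γ` lies
in the saturation of `ℤ ∙ α`, so `γ = c • α` and `g * c = 1`; hence the entries of `α` generate
`ℤ` and some functional `f` has `f α = 1`. Since `α` lives on the first `m` coordinates, `f`
restricts to `ℤᵐ`, where `x ↦ x - f x • α` maps onto `ker f` (free of rank `m - 1`) with kernel
`ℤ ∙ α`. The map `ψ` is this projection on `ℤᵐ` and the identity on the last `n - m` coordinates,
which are shifted down by one.
-/

/-- The saturation of a `ℤ`-submodule `M ⊆ ℤⁿ`:
`Sat(M) = {α ∈ ℤⁿ ∣ λ • α ∈ M for some nonzero λ ∈ ℤ}`. -/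
def Sat {n : ℕ} (M : Submodule ℤ (Fin n → ℤ)) : Submodule ℤ (Fin n → ℤ) where
  carrier := {α | ∃ l : ℤ, l ≠ 0 ∧ l • α ∈ M}
  zero_mem' := ⟨1, one_ne_zero, by simp⟩
  add_mem' := by
    rintro a b ⟨l, hl, hla⟩ ⟨m, hm, hmb⟩
    refine ⟨l * m, mul_ne_zero hl hm, ?_⟩
    have h1 : (l * m) • a ∈ M := by rw [mul_comm, mul_smul]; exact M.smul_mem m hla
    have h2 : (l * m) • b ∈ M := by rw [mul_smul]; exact M.smul_mem l hmb
    rw [smul_add]; exact M.add_mem h1 h2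
  smul_mem' := by
    rintro c a ⟨l, hl, hla⟩
    exact ⟨l, hl, by rw [smul_comm]; exact M.smul_mem c hla⟩

/-- `M ⊆ ℤⁿ` is weak-transversal to `E ⊆ {1,…,n}` if it admits a finite system of
`ℤ`-module generators all of whose coordinates indexed by `E` are nonnegative. -/
def WeakTransversal {n : ℕ} (M : Submodule ℤ (Fin n → ℤ)) (E : Set (Fin n)) : Prop :=
  ∃ (ℓ : ℕ) (α : Fin ℓ → Fin n → ℤ),
    (∀ i, ∀ j ∈ E, 0 ≤ α i j) ∧ Submodule.span ℤ (Set.range α) = M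

/-- `E_M = {j ∈ E ∣ prⱼ(M) ≠ 0}`. -/
def EM {n : ℕ} (M : Submodule ℤ (Fin n → ℤ)) (E : Set (Fin n)) : Set (Fin n) :=
  {j ∈ E | ∃ γ ∈ M, γ j ≠ 0}

open Module Submodule

section
variable (R : Type*) [Semiring R] {a b c : ℕ}

def Fin.appendLinearEquivOfEq (h : a + b = c) : ((Fin a → R) × (Fin b → R)) ≃ₗ[R] (Fin c → R) :=
  (LinearEquiv.sumArrowLequivProdArrow (Fin a) (Fin b) R R).symm.trans
    (LinearEquiv.funCongrLeft R R (finSumFinEquiv.trans (finCongr h)).symm)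

variable {R}

@[simp]
theorem Fin.appendLinearEquivOfEq_symm_apply (h : a + b = c) (x : Fin c → R) :
    (Fin.appendLinearEquivOfEq R h).symm x =
      (fun i => x (Fin.cast h (Fin.castAdd b i)), fun i => x (Fin.cast h (Fin.natAdd a i))) := by
  ext i <;> simp [Fin.appendLinearEquivOfEq, LinearEquiv.funCongrLeft_symm]

theorem Fin.appendLinearEquivOfEq_symm_single (h : a + b = c) {k : Fin b} {j : Fin c}
    (hkj : a + (k : ℕ) = j) (r : R) :
    (Fin.appendLinearEquivOfEq R h).symm (Pi.single j r) = (0, Pi.single k r) := by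
  ext i
  · have hik : (i : ℕ) ≠ a + k := by omega
    simp [Pi.single_apply, Fin.ext_iff, ← hkj, hik]
  · simp [Pi.single_apply, Fin.ext_iff, ← hkj]

end

theorem exists_surjective_ker_eq_span_singleton {R M : Type*} [CommRing R] [IsDomain R]
    [IsPrincipalIdealRing R] [AddCommGroup M] [Module R M] [Module.Free R M] [Module.Finite R M]
    {r : ℕ} (hM : finrank R M = r + 1) {β : M} {f : M →ₗ[R] R} (hf : f β = 1) :
    ∃ ψ : M →ₗ[R] (Fin r → R), Function.Surjective ψ ∧ LinearMap.ker ψ = R ∙ β := by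
  let P : M →ₗ[R] LinearMap.ker f :=
    (LinearMap.id - f.smulRight β).codRestrict _ fun x => by simp [hf]
  have hP : ∀ x, (P x : M) = x - f x • β := fun x => rfl
  have hP_surj : Function.Surjective P := fun y =>
    ⟨y, Subtype.ext <| by rw [hP, LinearMap.mem_ker.mp y.2, zero_smul, sub_zero]⟩
  have hP_ker : LinearMap.ker P = R ∙ β := by
    ext x
    rw [LinearMap.mem_ker, mem_span_singleton, ← Subtype.coe_inj, hP, ZeroMemClass.coe_zero,
      sub_eq_zero]
    refine ⟨fun h => ⟨f x, h.symm⟩, ?_⟩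
    rintro ⟨a, rfl⟩
    simp [hf]
  have hf_surj : Function.Surjective f := fun t => ⟨t • β, by simp [hf]⟩
  have hrank : finrank R (LinearMap.ker f) = r := by
    have := (LinearMap.ker f).finrank_quotient_add_finrank
    rw [(f.quotKerEquivOfSurjective hf_surj).finrank_eq, finrank_self, hM] at this
    omega
  let e := LinearEquiv.ofFinrankEq (LinearMap.ker f) (Fin r → R) (by rw [hrank, finrank_fin_fun])
  exact ⟨e ∘ₗ P, e.surjective.comp hP_surj, by rw [LinearEquiv.ker_comp, hP_ker]⟩

theorem exists_linearMap_eq_one_of_sat {n : ℕ} {α : Fin n → ℤ} (hα : α ≠ 0)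
    (hsat : Sat (span ℤ {α}) = span ℤ {α}) :
    ∃ f : (Fin n → ℤ) →ₗ[ℤ] ℤ, f α = 1 := by
  let g := IsPrincipal.generator (Ideal.span (Set.range α))
  have hdvd : ∀ i, g ∣ α i := fun i => Ideal.mem_span_singleton.mp <| by
    rw [Ideal.span_singleton_generator]; exact Ideal.subset_span ⟨i, rfl⟩
  choose γ hγ using hdvd
  have hgγ : g • γ = α := funext fun i => (hγ i).symm
  have hg : g ≠ 0 := by rintro hg; exact hα (by rw [← hgγ, hg, zero_smul])
  have hγ_sat : γ ∈ Sat (span ℤ {α}) := ⟨g, hg, by rw [hgγ]; exact mem_span_singleton_self α⟩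
  rw [hsat] at hγ_sat
  obtain ⟨c, hc⟩ := mem_span_singleton.mp hγ_sat
  have hgc : g * c = 1 := by
    have : (g * c - 1) • α = 0 := by rw [sub_smul, mul_smul, hc, hgγ, one_smul, sub_self]
    exact sub_eq_zero.mp ((smul_eq_zero.mp this).resolve_right hα)
  have h1 : (1 : ℤ) ∈ Ideal.span (Set.range α) := by
    rw [← Ideal.span_singleton_generator (Ideal.span (Set.range α)), Ideal.mem_span_singleton]
    exact ⟨c, hgc.symm⟩
  obtain ⟨u, hu⟩ := Ideal.mem_span_range_iff_exists_fun.mp h1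
  exact ⟨Fintype.linearCombination ℤ u, by simpa [Fintype.linearCombination_apply, mul_comm] using hu⟩

/-- If `α ∈ ℤⁿ` is nonzero, `α_{m+1} = ⋯ = αₙ = 0` (i.e. `α j = 0` for all
`0`-indexed `j` with `m ≤ j`), and `ℤ·α` is saturated, then there is a surjective
`ℤ`-linear map `ψ : ℤⁿ → ℤⁿ⁻¹` with kernel `ℤ·α` sending the `j`-th standard basis
vector to the `(j-1)`-st one for `j = m+1,…,n`. -/
theorem exists_surjective_ker_span_single {n : ℕ} (α : Fin n → ℤ) (hα : α ≠ 0)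
    (m : ℕ) (hm : m ≤ n) (hzero : ∀ j : Fin n, m ≤ (j : ℕ) → α j = 0)
    (hsat : Sat (Submodule.span ℤ {α}) = Submodule.span ℤ {α}) :
    ∃ ψ : (Fin n → ℤ) →ₗ[ℤ] (Fin (n - 1) → ℤ),
      Function.Surjective ψ ∧
      LinearMap.ker ψ = Submodule.span ℤ {α} ∧
      ∀ j : Fin n, m ≤ (j : ℕ) →
        ∀ i : Fin (n - 1), (i : ℕ) + 1 = (j : ℕ) →
          ψ (Pi.single j 1) = Pi.single i 1 := by
  obtain ⟨f, hf⟩ := exists_linearMap_eq_one_of_sat hα hsat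
  have hm₁ : 1 ≤ m := by
    by_contra! h
    exact hα (funext fun j => hzero j (by omega))
  let E := Fin.appendLinearEquivOfEq ℤ (show m + (n - m) = n by omega)
  let E' := Fin.appendLinearEquivOfEq ℤ (show m - 1 + (n - m) = n - 1 by omega)
  have hα_split : E.symm α = ((E.symm α).1, 0) :=
    Prod.ext rfl <| funext fun k => hzero _ (by simp)
  obtain ⟨ψ₀, hψ₀_surj, hψ₀_ker⟩ := exists_surjective_ker_eq_span_singleton (r := m - 1)
    (by rw [finrank_fin_fun]; omega) (f := f ∘ₗ E.toLinearMap ∘ₗ LinearMap.inl ℤ _ _)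
    (β := (E.symm α).1) (by simp [← hα_split, hf])
  refine ⟨E'.toLinearMap ∘ₗ ψ₀.prodMap LinearMap.id ∘ₗ E.symm.toLinearMap, ?_, ?_, ?_⟩
  · exact E'.surjective.comp ((hψ₀_surj.prodMap Function.surjective_id).comp E.symm.surjective)
  · rw [LinearEquiv.ker_comp, LinearMap.ker_comp, LinearMap.ker_prodMap, hψ₀_ker, LinearMap.ker_id,
      ← map_inl, map_span]
    simp [← hα_split, comap_equiv_eq_map_symm, map_span]
  · intro j hj i hij
    let k : Fin (n - m) := ⟨j - m, by omega⟩
    have hEj : E.symm (Pi.single j 1) = (0, Pi.single k 1) :=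
      Fin.appendLinearEquivOfEq_symm_single _ (by simp only [k]; omega) 1
    have hE'i : E'.symm (Pi.single i 1) = (0, Pi.single k 1) :=
      Fin.appendLinearEquivOfEq_symm_single _ (by simp only [k]; omega) 1
    simp [hEj, ← hE'i]
end

section
/- Let M ⊆ ℤⁿ be a ℤ-submodule and E ⊆ {1,…,n} a subset. Then M is weak-transversal to E if and only if there exists γ ∈ M with γⱼ > 0 for all j ∈ E_M. -/
section Span

variable {R V W : Type*} [Ring R] [AddCommGroup V] [Module R V] [AddCommGroup W] [Module R W]

theorem exists_mem_apply_ne_zero_of_mem_span {s : Set V} (f : V →ₗ[R] W) {x : V}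
    (hx : x ∈ Submodule.span R s) (hfx : f x ≠ 0) : ∃ v ∈ s, f v ≠ 0 := by
  by_contra! h
  have hker : Submodule.span R s ≤ LinearMap.ker f := Submodule.span_le.mpr h
  exact hfx (hker hx)

theorem span_insert_range_add_smul {ι : Type*} (γ : V) (β : ι → V) (c : ι → R) :
    Submodule.span R (insert γ (Set.range fun i => β i + c i • γ)) =
      Submodule.span R (insert γ (Set.range β)) := by
  have hγ {s : Set V} : γ ∈ Submodule.span R (insert γ s) :=
    Submodule.subset_span (Set.mem_insert γ s)
  have hmem {s : Set V} {v : V} (hv : v ∈ s) : v ∈ Submodule.span R (insert γ s) :=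
    Submodule.subset_span (Set.mem_insert_of_mem γ hv)
  apply le_antisymm <;> refine Submodule.span_le.mpr (Set.insert_subset hγ ?_) <;>
    rintro _ ⟨i, rfl⟩
  · exact add_mem (hmem ⟨i, rfl⟩) (Submodule.smul_mem _ _ hγ)
  · rw [← add_sub_cancel_right (β i) (c i • γ)]
    exact sub_mem (hmem ⟨i, rfl⟩) (Submodule.smul_mem _ _ hγ)

end Span

theorem exists_nonneg_add_mul {ι : Type*} [Fintype ι] (v w : ι → ℤ) (S : Set ι)
    (hw : ∀ j ∈ S, 0 < w j) : ∃ c : ℤ, ∀ j ∈ S, 0 ≤ v j + c * w j := by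
  refine ⟨∑ j, |v j|, fun j hj => ?_⟩
  have hvj : |v j| ≤ ∑ j, |v j| :=
    Finset.single_le_sum (fun j _ => abs_nonneg (v j)) (Finset.mem_univ j)
  have hc : ∑ j, |v j| ≤ (∑ j, |v j|) * w j :=
    le_mul_of_one_le_right ((abs_nonneg _).trans hvj) (hw j hj)
  linarith [neg_abs_le (v j)]

theorem apply_eq_zero_of_notMem_EM {n : ℕ} {M : Submodule ℤ (Fin n → ℤ)} {E : Set (Fin n)}
    {j : Fin n} (hjE : j ∈ E) (hjM : j ∉ EM M E) {δ : Fin n → ℤ} (hδ : δ ∈ M) : δ j = 0 := by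
  by_contra hδj
  exact hjM ⟨hjE, δ, hδ, hδj⟩

theorem WeakTransversal.exists_pos {n : ℕ} {M : Submodule ℤ (Fin n → ℤ)} {E : Set (Fin n)}
    (h : WeakTransversal M E) : ∃ γ ∈ M, ∀ j ∈ EM M E, 0 < γ j := by
  obtain ⟨ℓ, α, hα, rfl⟩ := h
  refine ⟨∑ i, α i, Submodule.sum_mem _ fun i _ => Submodule.subset_span ⟨i, rfl⟩, ?_⟩
  rintro j ⟨hjE, δ, hδ, hδj⟩
  obtain ⟨_, ⟨i, rfl⟩, hij⟩ := exists_mem_apply_ne_zero_of_mem_span (LinearMap.proj j) hδ hδj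
  rw [Finset.sum_apply]
  exact Finset.sum_pos' (fun i _ => hα i j hjE)
    ⟨i, Finset.mem_univ i, (hα i j hjE).lt_of_ne (Ne.symm hij)⟩

/-- Shifting each generator `β i` of `M` by a large multiple of `γ` makes its coordinates in
`E_M` nonnegative without changing the span, while the coordinates in `E \ E_M` vanish on `M`. -/
theorem weakTransversal_of_exists_pos {n : ℕ} {M : Submodule ℤ (Fin n → ℤ)} {E : Set (Fin n)}
    {γ : Fin n → ℤ} (hγM : γ ∈ M) (hγ : ∀ j ∈ EM M E, 0 < γ j) : WeakTransversal M E := by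
  obtain ⟨k, β, hβ⟩ :=
    Submodule.fg_iff_exists_fin_generating_family.mp (IsNoetherian.noetherian M)
  choose c hc using fun i => exists_nonneg_add_mul (β i) γ (EM M E) hγ
  set α : Fin (k + 1) → Fin n → ℤ := Fin.cons γ fun i => β i + c i • γ
  have hspan : Submodule.span ℤ (Set.range α) = M := by
    rw [Fin.range_cons, span_insert_range_add_smul, Submodule.span_insert, hβ,
      sup_eq_right, Submodule.span_singleton_le_iff_mem]
    exact hγM
  refine ⟨k + 1, α, fun i j hjE => ?_, hspan⟩
  by_cases hjM : j ∈ EM M E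
  · exact Fin.cases (hγ j hjM).le (fun i => hc i j hjM) i
  · exact (apply_eq_zero_of_notMem_EM hjE hjM
      (hspan ▸ Submodule.subset_span ⟨i, rfl⟩ : α i ∈ M)).ge

/-- `M` is weak-transversal to `E` if and only if there exists `γ ∈ M` with
`γⱼ > 0` for all `j ∈ E_M`. -/
theorem weakTransversal_iff_exists_pos {n : ℕ}
    (M : Submodule ℤ (Fin n → ℤ)) (E : Set (Fin n)) :
    WeakTransversal M E ↔ ∃ γ ∈ M, ∀ j ∈ EM M E, 0 < γ j :=
  ⟨WeakTransversal.exists_pos, fun ⟨_, hγM, hγ⟩ => weakTransversal_of_exists_pos hγM hγ⟩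
end

section
/- Let M ⊆ ℤⁿ be a ℤ-submodule and E ⊆ {1,…,n} a subset, and assume M is weak-transversal to E. Then M admits a system of ℤ-module generators α₁,…,α_ℓ such that for every i one has αᵢ,ⱼ ≥ 0 for all j ∈ E and αᵢ,ⱼ > 0 for all j ∈ E_M. -/
/-! Adding `β = ∑ᵢ αᵢ` to every generator `αᵢ` of `M` and keeping `β` itself gives a new generating
system (`αᵢ = (αᵢ + β) - β`). Its `E`-coordinates are still nonnegative, and at `j ∈ E_M` they are
positive: `βⱼ` is a sum of nonnegative terms, one of which is nonzero because otherwise every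
generator, hence all of `M`, would vanish at `j`. -/

theorem Submodule.span_insert_image_add_eq {R V : Type*} [Ring R] [AddCommGroup V] [Module R V]
    {s : Set V} {v : V} (hv : v ∈ Submodule.span R s) :
    Submodule.span R (insert v ((· + v) '' s)) = Submodule.span R s := by
  apply le_antisymm
  · rw [Submodule.span_le, Set.insert_subset_iff]
    refine ⟨hv, ?_⟩
    rintro _ ⟨x, hx, rfl⟩
    exact add_mem (Submodule.subset_span hx) hv
  · rw [Submodule.span_le]
    intro x hx
    have hxv : x + v ∈ Submodule.span R (insert v ((· + v) '' s)) :=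
      Submodule.subset_span (Set.mem_insert_of_mem _ ⟨x, hx, rfl⟩)
    have hv' : v ∈ Submodule.span R (insert v ((· + v) '' s)) :=
      Submodule.subset_span (Set.mem_insert _ _)
    simpa using sub_mem hxv hv'

theorem Submodule.exists_apply_ne_zero_of_mem_span {R V W ι : Type*} [Semiring R]
    [AddCommMonoid V] [Module R V] [AddCommMonoid W] [Module R W] (f : V →ₗ[R] W) {α : ι → V}
    {γ : V} (hγ : γ ∈ Submodule.span R (Set.range α)) (hfγ : f γ ≠ 0) : ∃ i, f (α i) ≠ 0 := by
  by_contra! hα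
  have hker : Submodule.span R (Set.range α) ≤ LinearMap.ker f := by
    rw [Submodule.span_le]
    rintro _ ⟨i, rfl⟩
    exact hα i
  exact hfγ (hker hγ)

/-- If `M` is weak-transversal to `E`, then `M` admits a system of `ℤ`-module
generators whose coordinates in `E` are nonnegative and whose coordinates in
`E_M` are (strictly) positive. -/
theorem weakTransversal_exists_positive_generators {n : ℕ}
    (M : Submodule ℤ (Fin n → ℤ)) (E : Set (Fin n)) (h : WeakTransversal M E) :
    ∃ (ℓ : ℕ) (α : Fin ℓ → Fin n → ℤ),
      (∀ i, ∀ j ∈ E, 0 ≤ α i j) ∧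
      (∀ i, ∀ j ∈ EM M E, 0 < α i j) ∧
      Submodule.span ℤ (Set.range α) = M := by
  obtain ⟨ℓ, α, hα, rfl⟩ := h
  set β : Fin n → ℤ := ∑ i, α i
  have hβE : ∀ j ∈ E, 0 ≤ β j := fun j hj => by
    simpa [β] using Finset.sum_nonneg fun i _ => hα i j hj
  have hβEM : ∀ j ∈ EM (Submodule.span ℤ (Set.range α)) E, 0 < β j := by
    rintro j ⟨hj, γ, hγ, hγj⟩
    obtain ⟨i, hi⟩ := Submodule.exists_apply_ne_zero_of_mem_span (LinearMap.proj j) hγ hγj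
    simpa [β] using Finset.sum_pos' (fun i _ => hα i j hj)
      ⟨i, Finset.mem_univ i, (hα i j hj).lt_of_ne' hi⟩
  refine ⟨ℓ + 1, Fin.cons β (fun i => α i + β), ?_, ?_, ?_⟩
  · simp only [Fin.forall_fin_succ, Fin.cons_zero, Fin.cons_succ, Pi.add_apply]
    exact ⟨hβE, fun i j hj => add_nonneg (hα i j hj) (hβE j hj)⟩
  · simp only [Fin.forall_fin_succ, Fin.cons_zero, Fin.cons_succ, Pi.add_apply]
    exact ⟨hβEM, fun i j hj => add_pos_of_nonneg_of_pos (hα i j hj.1) (hβEM j hj)⟩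
  · rw [Fin.range_cons, Set.range_comp' (· + β) α]
    exact Submodule.span_insert_image_add_eq
      (Submodule.sum_mem _ fun i _ => Submodule.subset_span ⟨i, rfl⟩)
end

section
/- Let E ⊆ {1,…,n} be a subset and let L ⊆ ℤⁿ be a saturated ℤ-submodule. Then there exists a unique ℤ-submodule L₀ ⊆ ℤⁿ such that: (1) L₀ ⊆ L; (2) L₀ is transversal to E; (3) every ℤ-submodule L₀′ ⊆ L that is transversal to E satisfies L₀′ ⊆ L₀. -/
/-- A `ℤ`-submodule is transversal to `E` if it is weak-transversal to `E` and saturated. -/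
def Transversal {n : ℕ} (L : Submodule ℤ (Fin n → ℤ)) (E : Set (Fin n)) : Prop :=
  WeakTransversal L E ∧ Sat L = L

/-!
The maximal submodule is `L₀ = Sat(N)`, where `N` is spanned by the elements of `L` that are
nonnegative on `E`: every submodule of `L` transversal to `E` is generated by such elements, hence
lies in `N`. For `Sat(N)` to be weak-transversal, take `β ∈ N` nonnegative on `E` and positive at
every `j ∈ E` where `N` is not identically zero (a sum of generators of `N`). Replacing each
generator `g` of `Sat(N)` by `g + k β` with `k` large makes it nonnegative on `E` without changing
the span, since `β` is kept as a generator too.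
-/

namespace Submodule

variable {n : ℕ} {E : Set (Fin n)} {M L : Submodule ℤ (Fin n → ℤ)}

theorem le_sat (M : Submodule ℤ (Fin n → ℤ)) : M ≤ Sat M :=
  fun _ hx => ⟨1, one_ne_zero, by simpa⟩

theorem sat_mono (h : M ≤ L) : Sat M ≤ Sat L :=
  fun _ ⟨l, hl, hlx⟩ => ⟨l, hl, h hlx⟩

theorem sat_sat (M : Submodule ℤ (Fin n → ℤ)) : Sat (Sat M) = Sat M := by
  refine le_antisymm ?_ (le_sat _)
  rintro x ⟨l, hl, m, hm, hmlx⟩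
  exact ⟨m * l, mul_ne_zero hm hl, by rwa [mul_smul]⟩

theorem EM_sat (M : Submodule ℤ (Fin n → ℤ)) (E : Set (Fin n)) : EM (Sat M) E = EM M E := by
  refine Set.Subset.antisymm ?_ fun j ⟨hjE, γ, hγ, hγj⟩ => ⟨hjE, γ, le_sat M hγ, hγj⟩
  rintro j ⟨hjE, γ, ⟨l, hl, hlγ⟩, hγj⟩
  exact ⟨hjE, l • γ, hlγ, by simp [hl, hγj]⟩

theorem weakTransversal_of_finset (G : Finset (Fin n → ℤ)) (hG : ∀ g ∈ G, ∀ j ∈ E, 0 ≤ g j)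
    (hspan : span ℤ (G : Set (Fin n → ℤ)) = M) : WeakTransversal M E :=
  ⟨G.toList.length, G.toList.get, fun i j hj => hG _ (G.mem_toList.1 (List.get_mem _ _)) j hj,
    by rw [Set.range_list_get]; simpa using hspan⟩

theorem weakTransversal_of_mem_of_pos {β : Fin n → ℤ} (hβM : β ∈ M) (hβ : ∀ j ∈ E, 0 ≤ β j)
    (hβpos : ∀ j ∈ EM M E, 0 < β j) : WeakTransversal M E := by
  classical
  obtain ⟨G, hG⟩ := IsNoetherian.noetherian M
  have hGM : ∀ g ∈ G, g ∈ M := fun g hg => hG ▸ subset_span hg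
  let shift : (Fin n → ℤ) → Fin n → ℤ := fun g => g + (∑ j, |g j|) • β
  have shift_nonneg : ∀ g ∈ M, ∀ j ∈ E, 0 ≤ shift g j := by
    intro g hg j hjE
    by_cases hj : j ∈ EM M E
    · have hβj : 1 ≤ β j := hβpos j hj
      have hgj : -g j ≤ ∑ i, |g i| :=
        (neg_le_abs _).trans (Finset.single_le_sum (fun i _ => abs_nonneg (g i)) (Finset.mem_univ j))
      have hsum : 0 ≤ ∑ i, |g i| := Finset.sum_nonneg fun i _ => abs_nonneg (g i)
      simp only [shift, Pi.add_apply, Pi.smul_apply, smul_eq_mul]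
      nlinarith
    · have hzero : ∀ γ ∈ M, γ j = 0 := fun γ hγ => by_contra fun h => hj ⟨hjE, γ, hγ, h⟩
      simp [shift, hzero g hg, hzero β hβM]
  refine weakTransversal_of_finset (insert β (G.image shift)) ?_ (le_antisymm ?_ ?_)
  · simp only [Finset.mem_insert, Finset.mem_image]
    rintro _ (rfl | ⟨g, hg, rfl⟩)
    exacts [hβ, shift_nonneg g (hGM g hg)]
  · simp only [span_le, Finset.coe_insert, Finset.coe_image, Set.insert_subset_iff,
      Set.image_subset_iff]
    exact ⟨hβM, fun g hg => M.add_mem (hGM g hg) (M.smul_mem _ hβM)⟩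
  · rw [← hG, span_le]
    intro g hg
    have hβ' : β ∈ span ℤ (insert β (G.image shift) : Finset _) := subset_span (by simp)
    have hshift : shift g ∈ span ℤ (insert β (G.image shift) : Finset _) :=
      subset_span (by simpa using Or.inr ⟨g, hg, rfl⟩)
    simpa [shift] using sub_mem hshift (smul_mem _ (∑ j, |g j|) hβ')

theorem exists_mem_span_nonneg_pos (S : Set (Fin n → ℤ)) (hS : ∀ s ∈ S, ∀ j ∈ E, 0 ≤ s j) :
    ∃ β ∈ span ℤ S, (∀ j ∈ E, 0 ≤ β j) ∧ ∀ j ∈ EM (span ℤ S) E, 0 < β j := by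
  classical
  have hwitness : ∀ j ∈ EM (span ℤ S) E, ∃ s ∈ S, 0 < s j := by
    rintro j ⟨hjE, γ, hγ, hγj⟩
    by_contra! h
    have : span ℤ S ≤ LinearMap.ker (LinearMap.proj j : (Fin n → ℤ) →ₗ[ℤ] ℤ) :=
      span_le.2 fun s hs => by simpa using le_antisymm (h s hs) (hS s hs j hjE)
    exact hγj (by simpa using this hγ)
  choose! c hcS hcpos using hwitness
  let T := Finset.univ.filter (· ∈ EM (span ℤ S) E)
  refine ⟨∑ j ∈ T, c j, sum_mem fun j hj => subset_span (hcS j (by simpa [T] using hj)), ?_, ?_⟩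
  · intro i hi
    simpa only [Finset.sum_apply] using
      Finset.sum_nonneg fun j hj => hS _ (hcS j (by simpa [T] using hj)) i hi
  · intro i hi
    have hiT : i ∈ T := by simpa [T] using hi
    rw [Finset.sum_apply]
    exact (hcpos i hi).trans_le <| Finset.single_le_sum
      (fun j hj => hS _ (hcS j (by simpa [T] using hj)) i hi.1) hiT

theorem transversal_sat_span (S : Set (Fin n → ℤ)) (hS : ∀ s ∈ S, ∀ j ∈ E, 0 ≤ s j) :
    Transversal (Sat (span ℤ S)) E := by
  obtain ⟨β, hβS, hβ, hβpos⟩ := exists_mem_span_nonneg_pos S hS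
  exact ⟨weakTransversal_of_mem_of_pos (le_sat _ hβS) hβ (by rwa [EM_sat]), sat_sat _⟩

theorem WeakTransversal.le_span_nonneg (hM : WeakTransversal M E) (hML : M ≤ L) :
    M ≤ span ℤ {α | α ∈ L ∧ ∀ j ∈ E, 0 ≤ α j} := by
  obtain ⟨ℓ, α, hα, rfl⟩ := hM
  exact span_mono (Set.range_subset_iff.2 fun i => ⟨hML (subset_span ⟨i, rfl⟩), hα i⟩)

end Submodule

open Submodule in
/-- For every saturated `ℤ`-submodule `L ⊆ ℤⁿ` there is a unique submodule `L₀`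
which is contained in `L`, transversal to `E`, and contains every submodule of `L`
transversal to `E`. -/
theorem existsUnique_maximal_transversal_submodule {n : ℕ}
    (E : Set (Fin n)) (L : Submodule ℤ (Fin n → ℤ)) (hL : Sat L = L) :
    ∃! L₀ : Submodule ℤ (Fin n → ℤ),
      L₀ ≤ L ∧ Transversal L₀ E ∧
      ∀ L₀' : Submodule ℤ (Fin n → ℤ), L₀' ≤ L → Transversal L₀' E → L₀' ≤ L₀ := by
  set N := span ℤ {α | α ∈ L ∧ ∀ j ∈ E, 0 ≤ α j}
  have hgreatest : IsGreatest {M | M ≤ L ∧ Transversal M E} (Sat N) :=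
    ⟨⟨(sat_mono (span_le.2 fun _ h => h.1)).trans hL.le, transversal_sat_span _ fun _ h => h.2⟩,
      fun M ⟨hML, hM, _⟩ => (hM.le_span_nonneg hML).trans (le_sat N)⟩
  refine ⟨Sat N, ⟨hgreatest.1.1, hgreatest.1.2, fun M hML hM => hgreatest.2 ⟨hML, hM⟩⟩, ?_⟩
  rintro M ⟨hML, hM, hmax⟩
  exact (hgreatest.unique ⟨⟨hML, hM⟩, fun M' h => hmax M' h.1 h.2⟩).symm
end

section
/- Let k be a field and let R = k[ℤⁿ] be the group algebra of ℤⁿ over k (the Laurent polynomial ring in n variables), writing x^β for the basis element corresponding to β ∈ ℤⁿ. Let β₁,…,β_s ∈ ℤⁿ and let J ⊆ R be the ideal generated by x^{β₁} − 1, …, x^{β_s} − 1. Assume J is a prime ideal. Then for every γ ∈ ℤⁿ, x^γ − 1 ∈ J if and only if γ belongs to the ℤ-submodule of ℤⁿ generated by β₁,…,β_s. -/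
/-!
The exponents `g` with `x^g - 1 ∈ I` form a subgroup for any ideal `I`, because
`x^(a+b) - 1 = x^a (x^b - 1) + (x^a - 1)` and `x^(-a) - 1 = -x^(-a) (x^a - 1)`; this gives
`⟨β⟩ ⊆ {γ | x^γ - 1 ∈ J}`. Conversely, `J` lies in the kernel of `k[ℤⁿ] → k[ℤⁿ/⟨β⟩]`, and
`x^γ - 1` is killed there only if `γ ∈ ⟨β⟩`.
-/

open scoped AddMonoidAlgebra

namespace AddMonoidAlgebra

variable {k : Type*} [Ring k]

section AddMonoid

variable {G : Type*} [AddMonoid G]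

theorem single_sub_one_mem_ker_mapDomainRingHom_iff [Nontrivial k] {H : Type*} [AddMonoid H]
    (f : G →+ H) (g : G) :
    single g (1 : k) - 1 ∈ RingHom.ker (mapDomainRingHom k f) ↔ f g = 0 := by
  rw [RingHom.mem_ker, map_sub, map_one, sub_eq_zero, mapDomainRingHom_apply, mapDomain_single,
    one_def]
  exact (single_left_injective one_ne_zero).eq_iff

theorem single_add_sub_one (a b : G) :
    single (a + b) (1 : k) - 1 = single a 1 * (single b 1 - 1) + (single a 1 - 1) := by
  rw [mul_sub, single_mul_single, mul_one, mul_one]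
  abel

end AddMonoid

variable {G : Type*} [AddCommGroup G]

theorem single_neg_sub_one (a : G) :
    single (-a) (1 : k) - 1 = -(single (-a) 1 * (single a 1 - 1)) := by
  rw [mul_sub, single_mul_single, neg_add_cancel, mul_one, mul_one, ← one_def, neg_sub]

def exponentSubgroup (I : Ideal k[G]) : AddSubgroup G where
  carrier := {g | single g 1 - 1 ∈ I}
  zero_mem' := by simp [← one_def]
  add_mem' {a b} ha hb := by
    change single (a + b) 1 - 1 ∈ I
    rw [single_add_sub_one]
    exact I.add_mem (I.mul_mem_left _ hb) ha
  neg_mem' {a} ha := by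
    change single (-a) 1 - 1 ∈ I
    rw [single_neg_sub_one]
    exact I.neg_mem (I.mul_mem_left _ ha)

theorem mem_exponentSubgroup {I : Ideal k[G]} {g : G} :
    g ∈ exponentSubgroup I ↔ single g 1 - 1 ∈ I :=
  Iff.rfl

theorem single_sub_one_mem_span_iff_mem_closure [Nontrivial k] (S : Set G) (g : G) :
    single g (1 : k) - 1 ∈ Ideal.span ((fun b => single b (1 : k) - 1) '' S) ↔
      g ∈ AddSubgroup.closure S := by
  set π := QuotientAddGroup.mk' (AddSubgroup.closure S)
  constructor
  · intro hg
    have hspan_le_ker : Ideal.span ((fun b => single b (1 : k) - 1) '' S) ≤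
        RingHom.ker (mapDomainRingHom k π) := by
      rw [Ideal.span_le]
      rintro _ ⟨b, hb, rfl⟩
      exact (single_sub_one_mem_ker_mapDomainRingHom_iff π b).2
        ((QuotientAddGroup.eq_zero_iff b).2 (AddSubgroup.subset_closure hb))
    exact (QuotientAddGroup.eq_zero_iff g).1
      ((single_sub_one_mem_ker_mapDomainRingHom_iff π g).1 (hspan_le_ker hg))
  · refine fun hg => mem_exponentSubgroup.1 ((AddSubgroup.closure_le _).2 ?_ hg)
    rintro b hb
    exact Ideal.subset_span ⟨b, hb, rfl⟩

end AddMonoidAlgebra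

theorem mem_hyperbolic_ideal_iff_mem_span_general {n s : ℕ} (k : Type*) [Field k]
    (β : Fin s → Fin n → ℤ)
    (J : Ideal (AddMonoidAlgebra k (Fin n → ℤ)))
    (hJ : J = Ideal.span
      (Set.range fun i : Fin s => AddMonoidAlgebra.single (β i) (1 : k) - 1))
    (γ : Fin n → ℤ) :
    AddMonoidAlgebra.single γ (1 : k) - 1 ∈ J ↔
      γ ∈ Submodule.span ℤ (Set.range β) := by
  rw [hJ, ← Submodule.mem_toAddSubgroup (Submodule.span ℤ _),
    Submodule.span_int_eq_addSubgroupClosure,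
    ← AddMonoidAlgebra.single_sub_one_mem_span_iff_mem_closure (k := k), ← Set.range_comp]
  rfl

/-- Let `k[ℤⁿ]` be the group algebra of `ℤⁿ` over a field `k` (the Laurent
polynomial ring in `n` variables), with `x^β` the basis element attached to
`β ∈ ℤⁿ`.  If the ideal `J = (x^{β₁} − 1, …, x^{β_s} − 1)` is prime, then for
every `γ ∈ ℤⁿ` one has `x^γ − 1 ∈ J` iff `γ` lies in the `ℤ`-submodule of `ℤⁿ`
generated by `β₁,…,β_s`. -/
theorem mem_hyperbolic_ideal_iff_mem_span {n s : ℕ} (k : Type*) [Field k]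
    (β : Fin s → Fin n → ℤ)
    (J : Ideal (AddMonoidAlgebra k (Fin n → ℤ)))
    (hJ : J = Ideal.span
      (Set.range fun i : Fin s => AddMonoidAlgebra.single (β i) (1 : k) - 1))
    (hprime : J.IsPrime) (γ : Fin n → ℤ) :
    AddMonoidAlgebra.single γ (1 : k) - 1 ∈ J ↔
      γ ∈ Submodule.span ℤ (Set.range β) :=
  mem_hyperbolic_ideal_iff_mem_span_general k β J hJ γ
end
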